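/- Fix a real parameter γ > 1. For Φ = (φ₁,φ₂,φ₃,φ₄) ∈ ℝ⁴ with φ₁ ≠ 0, set u = φ₂/φ₁, v = φ₃/φ₁ and define A(Φ) = (1/2)·[[u,1,0,0],[−u², 3u, 0, 4φ₄/φ₁],[−uv, v, 2u, 0],[−γu φ₄/φ₁, γ φ₄/φ₁, 0, 2u]], B(Φ) = (1/2)·[[v,0,1,0],[−uv, 2v, u, 0],[−v², 0, 3v, 4φ₄/φ₁],[−γv φ₄/φ₁, 0, γ φ₄/φ₁, 2v]], A₁(Φ) = (1/2)·[[u,0,0,0],[0,u,0,0],[0,0,u,0],[0, 2(γ−1)φ₄/φ₁, 0, (2−γ)u]], A₂(Φ) = (1/2)·[[u,0,0,0],[0,u,0,4φ₄/φ₁],[0,0,u,0],[0,0,0,(2−γ)u]], B₁(Φ) = (1/2)·[[v,0,0,0],[0,v,0,0],[0,0,v,0],[0,0,2(γ−1)φ₄/φ₁,(2−γ)v]], B₂(Φ) = (1/2)·[[v,0,0,0],[0,v,0,0],[0,0,v,4φ₄/φ₁],[0,0,0,(2−γ)v]]. Then for every differentiable Φ : ℝ → ℝ⁴ with φ₁(s)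 ≠ 0 for all s, the identities (d/ds)( A₁(Φ(s)) Φ(s) ) + A₂(Φ(s)) Φ'(s) = A(Φ(s)) Φ'(s) and (d/ds)( B₁(Φ(s)) Φ(s) ) + B₂(Φ(s)) Φ'(s) = B(Φ(s)) Φ'(s) hold for all s. -/
import Mathlib


open Matrix

/-- The `x`-direction coefficient matrix `A(Φ)` of the transformed Euler equations. -/
noncomputable def matA (γ : ℝ) (φ : Fin 4 → ℝ) : Matrix (Fin 4) (Fin 4) ℝ :=
  let u := φ 1 / φ 0
  let v := φ 2 / φ 0
  let q := φ 3 / φ 0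
  (1 / 2 : ℝ) • !![u, 1, 0, 0;
                   -u ^ 2, 3 * u, 0, 4 * q;
                   -(u * v), v, 2 * u, 0;
                   -(γ * u * q), γ * q, 0, 2 * u]

/-- The `y`-direction coefficient matrix `B(Φ)` of the transformed Euler equations. -/
noncomputable def matB (γ : ℝ) (φ : Fin 4 → ℝ) : Matrix (Fin 4) (Fin 4) ℝ :=
  let u := φ 1 / φ 0
  let v := φ 2 / φ 0
  let q := φ 3 / φ 0
  (1 / 2 : ℝ) • !![v, 0, 1, 0;
                   -(u * v), 2 * v, u, 0;
                   -v ^ 2, 0, 3 * v, 4 * q;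
                   -(γ * v * q), 0, γ * q, 2 * v]

/-- The split-form matrix `A₁(Φ) = P⁻¹Ã(Φ)/2`. -/
noncomputable def matA1 (γ : ℝ) (φ : Fin 4 → ℝ) : Matrix (Fin 4) (Fin 4) ℝ :=
  let u := φ 1 / φ 0
  let q := φ 3 / φ 0
  (1 / 2 : ℝ) • !![u, 0, 0, 0;
                   0, u, 0, 0;
                   0, 0, u, 0;
                   0, 2 * (γ - 1) * q, 0, (2 - γ) * u]

/-- The split-form matrix `A₂(Φ) = P⁻¹Ã(Φ)ᵀ/2`. -/
noncomputable def matA2 (γ : ℝ) (φ : Fin 4 → ℝ) : Matrix (Fin 4) (Fin 4) ℝ :=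
  let u := φ 1 / φ 0
  let q := φ 3 / φ 0
  (1 / 2 : ℝ) • !![u, 0, 0, 0;
                   0, u, 0, 4 * q;
                   0, 0, u, 0;
                   0, 0, 0, (2 - γ) * u]

/-- The split-form matrix `B₁(Φ) = P⁻¹B̃(Φ)/2`. -/
noncomputable def matB1 (γ : ℝ) (φ : Fin 4 → ℝ) : Matrix (Fin 4) (Fin 4) ℝ :=
  let v := φ 2 / φ 0
  let q := φ 3 / φ 0
  (1 / 2 : ℝ) • !![v, 0, 0, 0;
                   0, v, 0, 0;
                   0, 0, v, 0;
                   0, 0, 2 * (γ - 1) * q, (2 - γ) * v]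

/-- The split-form matrix `B₂(Φ) = P⁻¹B̃(Φ)ᵀ/2`. -/
noncomputable def matB2 (γ : ℝ) (φ : Fin 4 → ℝ) : Matrix (Fin 4) (Fin 4) ℝ :=
  let v := φ 2 / φ 0
  let q := φ 3 / φ 0
  (1 / 2 : ℝ) • !![v, 0, 0, 0;
                   0, v, 0, 0;
                   0, 0, v, 4 * q;
                   0, 0, 0, (2 - γ) * v]

set_option maxHeartbeats 1000000 in
/-- **Equivalence of the final split (skew-symmetric) form with the matrix-vector form:**
along any differentiable curve `Φ` with `φ₁ ≠ 0`,
`(A₁Φ)' + A₂Φ' = AΦ'` and `(B₁Φ)' + B₂Φ' = BΦ'`. -/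
theorem stmt_14 (γ : ℝ) (hγ : 1 < γ)
    (Φ : ℝ → Fin 4 → ℝ) (hΦ : Differentiable ℝ Φ) (hφ1 : ∀ s, Φ s 0 ≠ 0) :
    ∀ s, (deriv (fun r => (matA1 γ (Φ r)).mulVec (Φ r)) s
            + (matA2 γ (Φ s)).mulVec (deriv Φ s)
          = (matA γ (Φ s)).mulVec (deriv Φ s))
      ∧ (deriv (fun r => (matB1 γ (Φ r)).mulVec (Φ r)) s
            + (matB2 γ (Φ s)).mulVec (deriv Φ s)
          = (matB γ (Φ s)).mulVec (deriv Φ s)) := by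
  intro s
  have hD : ∀ i, HasDerivAt (fun r => Φ r i) (deriv Φ s i) s :=
    hasDerivAt_pi.mp (hΦ s).hasDerivAt
  have h0 := hD 0
  have h1 := hD 1
  have h2 := hD 2
  have h3 := hD 3
  have hne : Φ s 0 ≠ 0 := hφ1 s
  constructor
  · have heq : (fun r => (matA1 γ (Φ r)).mulVec (Φ r))
        = fun r => ![(1/2) * Φ r 1,
                     (1/2) * (Φ r 1 * Φ r 1 / Φ r 0),
                     (1/2) * (Φ r 1 * Φ r 2 / Φ r 0),
                     (1/2) * (γ * (Φ r 1 * Φ r 3 / Φ r 0))] := by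
      funext r
      funext i
      fin_cases i <;>
        simp [matA1, Matrix.mulVec, dotProduct, Fin.sum_univ_four] <;>
        field_simp [hφ1 r] <;> ring
    have hFA : HasDerivAt (fun r => (matA1 γ (Φ r)).mulVec (Φ r))
        ![(1/2) * deriv Φ s 1,
          (1/2) * (((deriv Φ s 1 * Φ s 1 + Φ s 1 * deriv Φ s 1) * Φ s 0 - Φ s 1 * Φ s 1 * deriv Φ s 0) / Φ s 0 ^ 2),
          (1/2) * (((deriv Φ s 1 * Φ s 2 + Φ s 1 * deriv Φ s 2) * Φ s 0 - Φ s 1 * Φ s 2 * deriv Φ s 0) / Φ s 0 ^ 2),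
          (1/2) * (γ * (((deriv Φ s 1 * Φ s 3 + Φ s 1 * deriv Φ s 3) * Φ s 0 - Φ s 1 * Φ s 3 * deriv Φ s 0) / Φ s 0 ^ 2))] s := by
      rw [heq]
      refine hasDerivAt_pi.mpr fun i => ?_
      fin_cases i
      · simpa using h1.const_mul (1/2 : ℝ)
      · simpa using (((h1.mul h1).div h0 hne).const_mul (1/2 : ℝ))
      · simpa using (((h1.mul h2).div h0 hne).const_mul (1/2 : ℝ))
      · simpa using ((((h1.mul h3).div h0 hne).const_mul γ).const_mul (1/2 : ℝ))
    rw [hFA.deriv]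
    funext i
    fin_cases i <;>
      simp [matA, matA2, Pi.add_apply, Matrix.mulVec, dotProduct, Fin.sum_univ_four] <;>
      field_simp [hne] <;> ring
  · have heq : (fun r => (matB1 γ (Φ r)).mulVec (Φ r))
        = fun r => ![(1/2) * Φ r 2,
                     (1/2) * (Φ r 2 * Φ r 1 / Φ r 0),
                     (1/2) * (Φ r 2 * Φ r 2 / Φ r 0),
                     (1/2) * (γ * (Φ r 2 * Φ r 3 / Φ r 0))] := by
      funext r
      funext i
      fin_cases i <;>
        simp [matB1, Matrix.mulVec, dotProduct, Fin.sum_univ_four] <;>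
        field_simp [hφ1 r] <;> ring
    have hFB : HasDerivAt (fun r => (matB1 γ (Φ r)).mulVec (Φ r))
        ![(1/2) * deriv Φ s 2,
          (1/2) * (((deriv Φ s 2 * Φ s 1 + Φ s 2 * deriv Φ s 1) * Φ s 0 - Φ s 2 * Φ s 1 * deriv Φ s 0) / Φ s 0 ^ 2),
          (1/2) * (((deriv Φ s 2 * Φ s 2 + Φ s 2 * deriv Φ s 2) * Φ s 0 - Φ s 2 * Φ s 2 * deriv Φ s 0) / Φ s 0 ^ 2),
          (1/2) * (γ * (((deriv Φ s 2 * Φ s 3 + Φ s 2 * deriv Φ s 3) * Φ s 0 - Φ s 2 * Φ s 3 * deriv Φ s 0) / Φ s 0 ^ 2))] s := by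
      rw [heq]
      refine hasDerivAt_pi.mpr fun i => ?_
      fin_cases i
      · simpa using h2.const_mul (1/2 : ℝ)
      · simpa using (((h2.mul h1).div h0 hne).const_mul (1/2 : ℝ))
      · simpa using (((h2.mul h2).div h0 hne).const_mul (1/2 : ℝ))
      · simpa using ((((h2.mul h3).div h0 hne).const_mul γ).const_mul (1/2 : ℝ))
    rw [hFB.deriv]
    funext i
    fin_cases i <;>
      simp [matB, matB2, Pi.add_apply, Matrix.mulVec, dotProduct, Fin.sum_univ_four] <;>
      field_simp [hne] <;> ring
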